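/- arXiv:2003.09919 — 2 statements merged into one kernel-verified Lean document; each statement's English description precedes it below -/
import Mathlib

section
/- Let Y be a metric space, κ ∈ ℝ, c ∈ Y, and let x₀, x₁, …, x_N (N ≥ 2) be points of Y, pairwise situations as follows: x_{j} ≠ x_{j+1} for all j, c ≠ x_j for all j, and the points lie in order on a geodesic, i.e. d(x_i, x_k) = Σ_{j=i}^{k−1} d(x_j, x_{j+1}) for all 0 ≤ i ≤ k ≤ N. If κ > 0, assume in addition that d(c, x_i) + d(c, x_j) + d(x_i, x_j) < 2π/√κ for all i, j. Suppose that for every 0 < j < N one has ∠̃_κ x_j(c, x_{j−1}) + ∠̃_κ x_j(c, x_{j+1}) ≤ π. Then the comparison angles are monotone along the chain: for all 0 ≤ i < j < k ≤ N, ∠̃_κ x_i(c, x_k) ≤ ∠̃_κ x_i(c, x_j) and ∠̃_κ x_k(c, x_i) ≤ ∠̃_κ x_k(c, x_j). In particular ∠̃_κ x_0(c, x_N) ≤ ∠̃_κ x_0(c, x_1). -/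
/-- The κ-comparison angle: the angle opposite the side of length `c` in the triangle with
side lengths `a`, `b`, `c` in the model plane of constant curvature `κ`. -/
noncomputable def compAngle (κ a b c : ℝ) : ℝ :=
  if κ = 0 then Real.arccos ((a ^ 2 + b ^ 2 - c ^ 2) / (2 * a * b))
  else if 0 < κ then
    Real.arccos ((Real.cos (Real.sqrt κ * c) -
      Real.cos (Real.sqrt κ * a) * Real.cos (Real.sqrt κ * b)) /
      (Real.sin (Real.sqrt κ * a) * Real.sin (Real.sqrt κ * b)))
  else
    Real.arccos ((Real.cosh (Real.sqrt (-κ) * a) * Real.cosh (Real.sqrt (-κ) * b) -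
      Real.cosh (Real.sqrt (-κ) * c)) /
      (Real.sinh (Real.sqrt (-κ) * a) * Real.sinh (Real.sqrt (-κ) * b)))

/-- The κ-comparison angle `∠̃_κ p (x, y)`. -/
noncomputable def compAngleAt {Y : Type*} [MetricSpace Y] (κ : ℝ) (p x y : Y) : ℝ :=
  compAngle κ (dist p x) (dist p y) (dist x y)

/-!
In each model plane the cosine of a comparison angle is an explicit function of the side
lengths. If `z` lies on a geodesic from `y` to `w`, with `a = |cy|`, `m = |cz|`, `s = |yz|`,
`t = |zw|` and `sn_κ` the model sine, a direct computation with the addition formulas gives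
`cos ∠̃y(c,w) - cos ∠̃y(c,z) = sn m · sn t / (sn a · sn (s + t)) · (cos ∠̃z(c,y) + cos ∠̃z(c,w))`.
When the two angles at `z` sum to at most `π` the right-hand side is nonnegative, which is
Alexandrov's Lemma. For `i < j < k` on the chain, induction on `k - i` bounds the angles at `x j`
towards `x i` and `x k` by those towards `x (j - 1)` and `x (j + 1)`, so the hypothesis at `x j`
lets Alexandrov's Lemma apply to the triple `x i, x j, x k`.
-/

open Real

noncomputable def compAngleCos (κ a b c : ℝ) : ℝ :=
  if κ = 0 then (a ^ 2 + b ^ 2 - c ^ 2) / (2 * a * b)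
  else if 0 < κ then
    (cos (√κ * c) - cos (√κ * a) * cos (√κ * b)) / (sin (√κ * a) * sin (√κ * b))
  else
    (cosh (√(-κ) * a) * cosh (√(-κ) * b) - cosh (√(-κ) * c)) /
      (sinh (√(-κ) * a) * sinh (√(-κ) * b))

noncomputable def modelSin (κ r : ℝ) : ℝ :=
  if κ = 0 then r else if 0 < κ then sin (√κ * r) else sinh (√(-κ) * r)

theorem compAngle_eq_arccos (κ a b c : ℝ) :
    compAngle κ a b c = arccos (compAngleCos κ a b c) := by
  unfold compAngle compAngleCos
  split_ifs <;> rfl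

theorem modelSin_pos {κ r : ℝ} (hr : 0 < r) (hκ : 0 < κ → r < π / √κ) : 0 < modelSin κ r := by
  unfold modelSin
  split_ifs with h0 hpos
  · exact hr
  · have hs := sqrt_pos.2 hpos
    exact sin_pos_of_pos_of_lt_pi (by positivity) ((lt_div_iff₀' hs).1 (hκ hpos))
  · have hneg : κ < 0 := lt_of_le_of_ne (not_lt.1 hpos) h0
    exact sinh_pos_iff.2 (mul_pos (sqrt_pos.2 (neg_pos.2 hneg)) hr)

theorem neg_one_le_compAngleCos {κ a b c : ℝ} (ha : 0 < modelSin κ a) (hb : 0 < modelSin κ b)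
    (hc : 0 ≤ c) (hcab : c ≤ a + b) (hper : 0 < κ → a + b + c < 2 * π / √κ) :
    -1 ≤ compAngleCos κ a b c := by
  unfold modelSin at ha hb
  unfold compAngleCos
  split_ifs at ha hb ⊢ with h0 hpos
  · rw [le_div_iff₀ (by positivity)]
    nlinarith
  · rw [le_div_iff₀ (mul_pos ha hb)]
    have hs := sqrt_pos.2 hpos
    have hper' := (lt_div_iff₀' hs).1 (hper hpos)
    -- `cos c - cos (a + b)` factors as a product of two sines of angles in `[0, π]`
    have key : 0 ≤ cos (√κ * c) - cos (√κ * (a + b)) := by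
      rw [cos_sub_cos]
      have h1 : 0 ≤ sin ((√κ * c + √κ * (a + b)) / 2) :=
        sin_nonneg_of_nonneg_of_le_pi (by nlinarith) (by nlinarith)
      have h2 : 0 ≤ sin ((√κ * (a + b) - √κ * c) / 2) :=
        sin_nonneg_of_nonneg_of_le_pi (by nlinarith) (by nlinarith)
      rw [← neg_sub (√κ * (a + b)), neg_div, sin_neg]
      nlinarith
    rw [mul_add, cos_add] at key
    linarith
  · rw [le_div_iff₀ (mul_pos ha hb)]
    have hs : 0 < √(-κ) := sqrt_pos.2 (neg_pos.2 (lt_of_le_of_ne (not_lt.1 hpos) h0))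
    have key : cosh (√(-κ) * c) ≤ cosh (√(-κ) * (a + b)) := by
      rw [cosh_le_cosh, abs_of_nonneg (by positivity), abs_of_nonneg (by nlinarith)]
      exact mul_le_mul_of_nonneg_left hcab hs.le
    rw [mul_add, cosh_add] at key
    linarith

theorem compAngleCos_add_sub {κ a m b s t : ℝ} (ha : modelSin κ a ≠ 0) (hm : modelSin κ m ≠ 0)
    (hs : modelSin κ s ≠ 0) (ht : modelSin κ t ≠ 0) (hst : modelSin κ (s + t) ≠ 0) :
    compAngleCos κ a (s + t) b - compAngleCos κ a s m =
      modelSin κ m * modelSin κ t / (modelSin κ a * modelSin κ (s + t)) *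
        (compAngleCos κ m s a + compAngleCos κ m t b) := by
  unfold modelSin at *
  unfold compAngleCos
  split_ifs at * with h0 hpos
  · field_simp
    ring
  · field_simp
    rw [mul_add, sin_add, cos_add]
    linear_combination cos (√κ * a) * sin (√κ * t) * sin_sq_add_cos_sq (√κ * s)
  · field_simp
    rw [mul_add, sinh_add, cosh_add]
    linear_combination -cosh (√(-κ) * a) * sinh (√(-κ) * t) * cosh_sq_sub_sinh_sq (√(-κ) * s)

theorem modelSin_pos_of_perimeter {κ a b c : ℝ} (ha : 0 < a) (habc : a ≤ b + c)
    (hper : 0 < κ → a + b + c < 2 * π / √κ) : 0 < modelSin κ a :=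
  modelSin_pos ha fun hκ => by linarith [hper hκ, mul_div_assoc 2 π √κ]

theorem add_nonneg_of_arccos_add_arccos_le_pi {p q : ℝ} (hp : -1 ≤ p) (hq : -1 ≤ q)
    (h : arccos p + arccos q ≤ π) : 0 ≤ p + q := by
  by_contra! hlt
  have := arccos_lt_arccos hq (by linarith : q < -p) (by linarith)
  rw [arccos_neg] at this
  linarith

theorem compAngle_le_of_add_le_pi {κ a m b s t : ℝ} (ha : 0 < modelSin κ a)
    (hm : 0 < modelSin κ m) (hs : 0 < modelSin κ s) (ht : 0 < modelSin κ t)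
    (hst : 0 < modelSin κ (s + t)) (ha₀ : 0 ≤ a) (hb₀ : 0 ≤ b) (hams : a ≤ m + s)
    (hbmt : b ≤ m + t) (hper₁ : 0 < κ → m + s + a < 2 * π / √κ)
    (hper₂ : 0 < κ → m + t + b < 2 * π / √κ)
    (h : compAngle κ m s a + compAngle κ m t b ≤ π) :
    compAngle κ a (s + t) b ≤ compAngle κ a s m := by
  rw [compAngle_eq_arccos, compAngle_eq_arccos] at h ⊢
  have hsum := add_nonneg_of_arccos_add_arccos_le_pi
    (neg_one_le_compAngleCos hm hs ha₀ hams hper₁) (neg_one_le_compAngleCos hm ht hb₀ hbmt hper₂) h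
  apply arccos_le_arccos
  rw [← sub_nonneg, compAngleCos_add_sub ha.ne' hm.ne' hs.ne' ht.ne' hst.ne']
  exact mul_nonneg (by positivity) hsum

theorem alexandrov_lemma {Y : Type*} [MetricSpace Y] {κ : ℝ} {c y z w : Y} (hy : c ≠ y)
    (hz : c ≠ z) (hyz : y ≠ z) (hzw : z ≠ w) (hyw : dist y w = dist y z + dist z w)
    (hper₁ : 0 < κ → dist c y + dist c z + dist y z < 2 * π / √κ)
    (hper₂ : 0 < κ → dist c z + dist c w + dist z w < 2 * π / √κ)
    (hper₃ : 0 < κ → dist c y + dist c w + dist y w < 2 * π / √κ)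
    (h : compAngleAt κ z c y + compAngleAt κ z c w ≤ π) :
    compAngleAt κ y c w ≤ compAngleAt κ y c z := by
  unfold compAngleAt at h ⊢
  rw [dist_comm z c, dist_comm z y] at h
  rw [dist_comm y c, hyw]
  rw [hyw] at hper₃
  have hyw_le : dist y z + dist z w ≤ dist c y + dist c w := hyw ▸ dist_triangle_left y w c
  exact compAngle_le_of_add_le_pi
    (modelSin_pos_of_perimeter (dist_pos.2 hy) (dist_triangle_right c y z) hper₁)
    (modelSin_pos_of_perimeter (dist_pos.2 hz) (dist_triangle c y z)
      fun hκ => by linarith [hper₁ hκ])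
    (modelSin_pos_of_perimeter (dist_pos.2 hyz) (dist_triangle_left y z c)
      fun hκ => by linarith [hper₁ hκ])
    (modelSin_pos_of_perimeter (dist_pos.2 hzw) (dist_triangle_left z w c)
      fun hκ => by linarith [hper₂ hκ])
    (modelSin_pos_of_perimeter (add_pos_of_pos_of_nonneg (dist_pos.2 hyz) dist_nonneg) hyw_le
      fun hκ => by linarith [hper₃ hκ])
    dist_nonneg dist_nonneg (dist_triangle_right c y z) (dist_triangle c z w)
    (fun hκ => by linarith [hper₁ hκ]) (fun hκ => by linarith [hper₂ hκ]) h

theorem dist_eq_add_of_dist_eq_sum {Y : Type*} [PseudoMetricSpace Y] {N : ℕ} {x : ℕ → Y}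
    (horder : ∀ i k, i ≤ k → k ≤ N →
      dist (x i) (x k) = ∑ j ∈ Finset.Ico i k, dist (x j) (x (j + 1)))
    {i j k : ℕ} (hij : i ≤ j) (hjk : j ≤ k) (hkN : k ≤ N) :
    dist (x i) (x k) = dist (x i) (x j) + dist (x j) (x k) := by
  rw [horder i j hij (hjk.trans hkN), horder j k hjk hkN, horder i k (hij.trans hjk) hkN,
    Finset.sum_Ico_consecutive _ hij hjk]

theorem compAngleAt_chain_antitone {Y : Type*} [MetricSpace Y] {κ : ℝ} {c : Y} {N : ℕ}
    {x : ℕ → Y} (hne : ∀ {i k}, i < k → k ≤ N → x i ≠ x k) (hc : ∀ j ≤ N, c ≠ x j)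
    (hsplit : ∀ {i j k}, i ≤ j → j ≤ k → k ≤ N →
      dist (x i) (x k) = dist (x i) (x j) + dist (x j) (x k))
    (hperim : 0 < κ → ∀ i ≤ N, ∀ j ≤ N,
      dist c (x i) + dist c (x j) + dist (x i) (x j) < 2 * π / √κ)
    (hang : ∀ j, 0 < j → j < N →
      compAngleAt κ (x j) c (x (j - 1)) + compAngleAt κ (x j) c (x (j + 1)) ≤ π)
    {i j k : ℕ} (hij : i < j) (hjk : j < k) (hkN : k ≤ N) :
    compAngleAt κ (x i) c (x k) ≤ compAngleAt κ (x i) c (x j) ∧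
      compAngleAt κ (x k) c (x i) ≤ compAngleAt κ (x k) c (x j) := by
  have alexandrov : ∀ {i j k}, i ≤ N → j ≤ N → k ≤ N → x i ≠ x j → x j ≠ x k →
      dist (x i) (x k) = dist (x i) (x j) + dist (x j) (x k) →
      compAngleAt κ (x j) c (x i) + compAngleAt κ (x j) c (x k) ≤ π →
      compAngleAt κ (x i) c (x k) ≤ compAngleAt κ (x i) c (x j) :=
    fun hi hj hk hij hjk hsum h => alexandrov_lemma (hc _ hi) (hc _ hj) hij hjk hsum
      (fun hκ => hperim hκ _ hi _ hj) (fun hκ => hperim hκ _ hj _ hk)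
      (fun hκ => hperim hκ _ hi _ hk) h
  induction hn : k - i using Nat.strong_induction_on generalizing i j k with
  | _ n ih =>
    have left : compAngleAt κ (x j) c (x i) ≤ compAngleAt κ (x j) c (x (j - 1)) := by
      obtain rfl | hi : i = j - 1 ∨ i < j - 1 := by omega
      · exact le_rfl
      · exact (ih (j - i) (by omega) hi (by omega) (by omega) rfl).2
    have right : compAngleAt κ (x j) c (x k) ≤ compAngleAt κ (x j) c (x (j + 1)) := by
      obtain rfl | hk : k = j + 1 ∨ j + 1 < k := by omega
      · exact le_rfl
      · exact (ih (k - j) (by omega) (by omega) hk hkN rfl).1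
    have hsum := (add_le_add left right).trans (hang j (by omega) (by omega))
    have hsplit' := hsplit hij.le hjk.le hkN
    refine ⟨alexandrov (by omega) (by omega) hkN (hne hij (by omega)) (hne hjk hkN) hsplit' hsum,
      alexandrov hkN (by omega) (by omega) (hne hjk hkN).symm (hne hij (by omega)).symm ?_ ?_⟩
    · rw [dist_comm (x k) (x i), hsplit', dist_comm (x k) (x j), dist_comm (x j) (x i), add_comm]
    · rwa [add_comm]

/-- Monotonicity of comparison angles along a chain of points lying in order on a geodesic,
obtained by iterating Alexandrov's Lemma. -/
theorem chain_compAngle_monotone {Y : Type*} [MetricSpace Y] (κ : ℝ) (c : Y)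
    (N : ℕ) (hN : 2 ≤ N) (x : ℕ → Y)
    (hadj : ∀ j < N, x j ≠ x (j + 1))
    (hc : ∀ j ≤ N, c ≠ x j)
    (horder : ∀ i k, i ≤ k → k ≤ N →
      dist (x i) (x k) = ∑ j ∈ Finset.Ico i k, dist (x j) (x (j + 1)))
    (hperim : 0 < κ → ∀ i ≤ N, ∀ j ≤ N,
      dist c (x i) + dist c (x j) + dist (x i) (x j) < 2 * Real.pi / Real.sqrt κ)
    (hang : ∀ j, 0 < j → j < N →
      compAngleAt κ (x j) c (x (j - 1)) + compAngleAt κ (x j) c (x (j + 1)) ≤ Real.pi) :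
    (∀ i j k, i < j → j < k → k ≤ N →
      compAngleAt κ (x i) c (x k) ≤ compAngleAt κ (x i) c (x j) ∧
      compAngleAt κ (x k) c (x i) ≤ compAngleAt κ (x k) c (x j)) ∧
    compAngleAt κ (x 0) c (x N) ≤ compAngleAt κ (x 0) c (x 1) := by
  have hsplit : ∀ {i j k}, i ≤ j → j ≤ k → k ≤ N →
      dist (x i) (x k) = dist (x i) (x j) + dist (x j) (x k) :=
    dist_eq_add_of_dist_eq_sum horder
  have hne : ∀ {i k}, i < k → k ≤ N → x i ≠ x k := fun {i} _ hik hkN => by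
    rw [← dist_pos, hsplit (Nat.le_succ i) hik hkN]
    exact add_pos_of_pos_of_nonneg (dist_pos.2 (hadj i (by omega))) dist_nonneg
  refine ⟨fun _ _ _ => compAngleAt_chain_antitone hne hc hsplit hperim hang, ?_⟩
  exact (compAngleAt_chain_antitone hne hc hsplit hperim hang one_pos (by omega) le_rfl).1
end

section
/- Let U and V be metric spaces, with V a geodesic space, and let f : U → V be a 1-Lipschitz surjection satisfying the length-preserving lifting property. Then for every p̂ ∈ U and every q ∈ V there exists q̂ ∈ U with f(q̂) = q and d_U(p̂, q̂) = d_V(f(p̂), q). -/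
/-- `γ : [0,T] → Y` is a unit-speed geodesic. -/
def IsUnitSpeedOn {Y : Type*} [MetricSpace Y] (γ : ℝ → Y) (T : ℝ) : Prop :=
  ∀ s ∈ Set.Icc (0 : ℝ) T, ∀ t ∈ Set.Icc (0 : ℝ) T, dist (γ s) (γ t) = |s - t|

/-- `γ` is a (unit-speed) geodesic from `a` to `b`, parametrized on `[0, dist a b]`. -/
def IsGeodesicFromTo {Y : Type*} [MetricSpace Y] (a b : Y) (γ : ℝ → Y) : Prop :=
  γ 0 = a ∧ γ (dist a b) = b ∧ IsUnitSpeedOn γ (dist a b)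

/-- A geodesic space: any two points are joined by a geodesic. -/
def IsGeodesicSpace (Y : Type*) [MetricSpace Y] : Prop :=
  ∀ x y : Y, ∃ γ : ℝ → Y, IsGeodesicFromTo x y γ

/-- `f : U → V` satisfies the length-preserving lifting property: every geodesic
`γ : [0,T] → V` lifts, at any point of the fiber over `γ 0`, to a continuous curve in `U`
whose restriction to `[0,t]` has length `t` for every `t ∈ (0,T]`. -/
def LengthPreservingLifting {U V : Type*} [MetricSpace U] [MetricSpace V] (f : U → V) : Prop :=
  ∀ T : ℝ, 0 ≤ T → ∀ γ : ℝ → V, IsUnitSpeedOn γ T →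
    ∀ phat : U, f phat = γ 0 →
      ∃ γhat : ℝ → U, ContinuousOn γhat (Set.Icc 0 T) ∧ γhat 0 = phat ∧
        (∀ t ∈ Set.Icc (0 : ℝ) T, f (γhat t) = γ t) ∧
        (∀ t : ℝ, 0 < t → t ≤ T → eVariationOn γhat (Set.Icc 0 t) = ENNReal.ofReal t)

/-! Lift a geodesic from `f p̂` to `q` starting at `p̂`. The endpoint `q̂` of the lift lies over `q`
and its distance to `p̂` is at most the length `d(f p̂, q)` of the lift, while `f` being
1-Lipschitz gives `d(f p̂, q) = d(f p̂, f q̂) ≤ d(p̂, q̂)`. -/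

lemma dist_le_of_eVariationOn_Icc_le {α E : Type*} [LinearOrder α] [PseudoMetricSpace E]
    {g : α → E} {a b : α} {L : ℝ} (hab : a ≤ b) (hL : 0 ≤ L)
    (hvar : eVariationOn g (Set.Icc a b) ≤ ENNReal.ofReal L) : dist (g a) (g b) ≤ L :=
  (edist_le_ofReal hL).mp <|
    (eVariationOn.edist_le g (s := Set.Icc a b) ⟨le_rfl, hab⟩ ⟨hab, le_rfl⟩).trans hvar

theorem exists_dist_realizing_lift_general {U V : Type*} [MetricSpace U] [MetricSpace V]
    (hV : IsGeodesicSpace V) (f : U → V)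
    (hlip : LipschitzWith 1 f) (hlift : LengthPreservingLifting f) :
    ∀ (phat : U) (q : V), ∃ qhat : U, f qhat = q ∧ dist phat qhat = dist (f phat) q := by
  intro phat q
  obtain ⟨γ, hγ0, hγq, hγ⟩ := hV (f phat) q
  set T := dist (f phat) q
  have hT : 0 ≤ T := dist_nonneg
  obtain ⟨γhat, -, hstart, hproj, hlen⟩ := hlift T hT γ hγ phat hγ0.symm
  have hend : f (γhat T) = q := by rw [hproj T ⟨hT, le_rfl⟩, hγq]
  refine ⟨γhat T, hend, le_antisymm ?_ ?_⟩
  · rw [← hstart]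
    rcases hT.eq_or_lt with hzero | hpos
    · simp [← hzero]
    · exact dist_le_of_eVariationOn_Icc_le hT hT (hlen T hpos le_rfl).le
  · simpa [hend] using hlip.dist_le_mul phat (γhat T)

/-- Distance-realizing lifts of points: if `f` is a 1-Lipschitz surjection onto a geodesic
space with the length-preserving lifting property, then any point of `V` lifts to a point
of `U` at the same distance from a prescribed point of the fiber. -/
theorem exists_dist_realizing_lift {U V : Type*} [MetricSpace U] [MetricSpace V]
    (hV : IsGeodesicSpace V) (f : U → V) (hsurj : Function.Surjective f)
    (hlip : LipschitzWith 1 f) (hlift : LengthPreservingLifting f) :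
    ∀ (phat : U) (q : V), ∃ qhat : U, f qhat = q ∧ dist phat qhat = dist (f phat) q :=
  exists_dist_realizing_lift_general hV f hlip hlift
end
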